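/- Let Q ∈ ℝ^{n×n} be symmetric positive definite, and set P = Q⁻¹, F = R Q⁻¹, G = S⁻¹ for matrices R ∈ ℝ^{m×n} and invertible S ∈ ℝ^{m×m}. If the block matrix [[AQ + QAᵀ - BR - RᵀBᵀ, QC₀ᵀ - BSᵀ], [C₀Q - SBᵀ, -D₀Sᵀ - SD₀ᵀ]] is negative definite, then the block matrix [[P(A-BF) + (A-BF)ᵀP, PB - (GC₀)ᵀ], [(PB - (GC₀)ᵀ)ᵀ, -(GD₀ + (GD₀)ᵀ)]] is negative definite. -/

import Mathlib

open Matrix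

lemma congrPosDef {k : Type*} [Fintype k] [DecidableEq k]
    {X M : Matrix k k ℝ} (hX : X.PosDef) (hM : IsUnit M) :
    (M * X * Mᵀ).PosDef := by
  rw [Matrix.posDef_iff_dotProduct_mulVec]
  constructor
  · have h1 := hX.1
    simp only [IsHermitian, conjTranspose_eq_transpose_of_trivial] at h1 ⊢
    simp [Matrix.transpose_mul, Matrix.mul_assoc, h1]
  · intro x hx
    have hMT : IsUnit Mᵀ := by
      rw [Matrix.isUnit_iff_isUnit_det, Matrix.det_transpose,
        ← Matrix.isUnit_iff_isUnit_det]
      exact hM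
    have hy : Mᵀ *ᵥ x ≠ 0 := by
      intro h
      exact hx ((Matrix.mulVec_injective_iff_isUnit.mpr hMT)
        (h.trans (Matrix.mulVec_zero Mᵀ).symm))
    have key : star x ⬝ᵥ (M * X * Mᵀ) *ᵥ x = star (Mᵀ *ᵥ x) ⬝ᵥ X *ᵥ (Mᵀ *ᵥ x) := by
      rw [← Matrix.mulVec_mulVec, ← Matrix.mulVec_mulVec, star_trivial, star_trivial,
        Matrix.dotProduct_mulVec, ← Matrix.mulVec_transpose]
    rw [key]
    exact hX.dotProduct_mulVec_pos hy

theorem stmt6 (n m : ℕ) (A : Matrix (Fin n) (Fin n) ℝ) (B : Matrix (Fin n) (Fin m) ℝ)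
    (C0 : Matrix (Fin m) (Fin n) ℝ) (D0 : Matrix (Fin m) (Fin m) ℝ)
    (Q : Matrix (Fin n) (Fin n) ℝ) (R : Matrix (Fin m) (Fin n) ℝ)
    (S : Matrix (Fin m) (Fin m) ℝ)
    (hQ : Q.PosDef) (hS : IsUnit S)
    (hLMI : (-(Matrix.fromBlocks
        (A * Q + Q * Aᵀ - B * R - Rᵀ * Bᵀ) (Q * C0ᵀ - B * Sᵀ)
        (C0 * Q - S * Bᵀ) (-(D0 * Sᵀ) - S * D0ᵀ))).PosDef) :
    (-(Matrix.fromBlocks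
        (Q⁻¹ * (A - B * (R * Q⁻¹)) + (A - B * (R * Q⁻¹))ᵀ * Q⁻¹)
        (Q⁻¹ * B - (S⁻¹ * C0)ᵀ)
        (Q⁻¹ * B - (S⁻¹ * C0)ᵀ)ᵀ
        (-(S⁻¹ * D0 + (S⁻¹ * D0)ᵀ)))).PosDef := by
  have hQd : IsUnit Q.det := hQ.isUnit.map detMonoidHom
  have hSd : IsUnit S.det := hS.map detMonoidHom
  have hQ2 : Q * Q⁻¹ = 1 := Matrix.mul_nonsing_inv Q hQd
  have hQ1 : Q⁻¹ * Q = 1 := Matrix.nonsing_inv_mul Q hQd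
  have hS1 : S⁻¹ * S = 1 := Matrix.nonsing_inv_mul S hSd
  have hQsym : Qᵀ = Q := by
    have := hQ.1
    simpa [conjTranspose_eq_transpose_of_trivial, Matrix.IsSymm] using this
  have hQit : (Q⁻¹)ᵀ = Q⁻¹ := by
    rw [Matrix.transpose_nonsing_inv, hQsym]
  have hSt2 : Sᵀ * (S⁻¹)ᵀ = 1 := by
    rw [← Matrix.transpose_mul, hS1, Matrix.transpose_one]
  have hQ1' : ∀ (p : ℕ) (X : Matrix (Fin n) (Fin p) ℝ), Q⁻¹ * (Q * X) = X := by
    intro p X; rw [← Matrix.mul_assoc, hQ1, Matrix.one_mul]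
  have hS1' : ∀ (p : ℕ) (X : Matrix (Fin m) (Fin p) ℝ), S⁻¹ * (S * X) = X := by
    intro p X; rw [← Matrix.mul_assoc, hS1, Matrix.one_mul]
  set M : Matrix (Fin n ⊕ Fin m) (Fin n ⊕ Fin m) ℝ :=
    Matrix.fromBlocks Q⁻¹ 0 0 (-(S⁻¹)) with hM
  have hMu : IsUnit M := by
    rw [Matrix.isUnit_iff_isUnit_det, hM, Matrix.det_fromBlocks_zero₂₁]
    exact ((Matrix.isUnit_nonsing_inv_iff.mpr hQ.isUnit).map detMonoidHom).mul
      (((Matrix.isUnit_nonsing_inv_iff.mpr hS).neg).map detMonoidHom)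
  have key : (Matrix.fromBlocks
        (Q⁻¹ * (A - B * (R * Q⁻¹)) + (A - B * (R * Q⁻¹))ᵀ * Q⁻¹)
        (Q⁻¹ * B - (S⁻¹ * C0)ᵀ)
        (Q⁻¹ * B - (S⁻¹ * C0)ᵀ)ᵀ
        (-(S⁻¹ * D0 + (S⁻¹ * D0)ᵀ)))
      = M * (Matrix.fromBlocks
        (A * Q + Q * Aᵀ - B * R - Rᵀ * Bᵀ) (Q * C0ᵀ - B * Sᵀ)
        (C0 * Q - S * Bᵀ) (-(D0 * Sᵀ) - S * D0ᵀ)) * Mᵀ := by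
    rw [hM, Matrix.fromBlocks_transpose, Matrix.fromBlocks_multiply,
      Matrix.fromBlocks_multiply]
    rw [Matrix.fromBlocks_inj]
    refine ⟨?_, ?_, ?_, ?_⟩ <;>
      simp only [Matrix.transpose_zero, Matrix.transpose_neg, hQit,
        Matrix.mul_zero, Matrix.zero_mul, add_zero, zero_add,
        Matrix.mul_sub, Matrix.sub_mul, Matrix.mul_add, Matrix.add_mul,
        Matrix.mul_neg, Matrix.neg_mul, neg_neg, neg_sub,
        Matrix.transpose_sub, Matrix.transpose_add, Matrix.transpose_mul,
        Matrix.transpose_transpose,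
        Matrix.mul_assoc, hQ2, hSt2, hQ1' , hS1',
        Matrix.mul_one, Matrix.one_mul] <;>
      abel
  rw [key, ← Matrix.neg_mul, ← Matrix.mul_neg]
  exact congrPosDef hLMI hMu
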